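/- arXiv:0810.2289 — 6 statements merged into one kernel-verified Lean document; each statement's English description precedes it below -/
import Mathlib

section
/- Let X be an upward run chain on a discrete poset (S, ≼) with minimum element e, in which every chain from e to any x is finite. Then the chain is irreducible and aperiodic. -/
open scoped ENNReal

noncomputable section
open scoped Classical

/-- The probability of following the word `l` of successive states, starting at `x`,
under the transition kernel `P`. -/
def wordProb {S : Type*} (P : S → S → ℝ≥0∞) : S → List S → ℝ≥0∞
  | _, [] => 1
  | x, y :: l => P x y * wordProb P y l

/-- `hitProb P e x = Pr_e(T_x ≤ T_e)`: the probability, starting at `e`, that the chain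
reaches `x` (at a positive time) before returning to `e`; by convention it is `1` at `e`. -/
def hitProb {S : Type*} (P : S → S → ℝ≥0∞) (e x : S) : ℝ≥0∞ :=
  if x = e then 1
  else ∑' l : {l : List S // x ∉ l ∧ e ∉ l}, wordProb P e (l.1 ++ [x])

/-- `survival P e n = Pr_e(T_e > n)`: the chain avoids `e` during the first `n` steps. -/
def survival {S : Type*} (P : S → S → ℝ≥0∞) (e : S) (n : ℕ) : ℝ≥0∞ :=
  ∑' l : {l : List S // l.length = n ∧ e ∉ l}, wordProb P e l.1

/-- `returnAt P e n = Pr_e(T_e = n + 1)`: first return to `e` at time `n+1`. -/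
def returnAt {S : Type*} (P : S → S → ℝ≥0∞) (e : S) (n : ℕ) : ℝ≥0∞ :=
  ∑' l : {l : List S // l.length = n ∧ e ∉ l}, wordProb P e (l.1 ++ [e])

/-- The chain is recurrent (at `e`) if it returns to `e` with probability one. -/
def Recurrent {S : Type*} (P : S → S → ℝ≥0∞) (e : S) : Prop :=
  ∑' n : ℕ, returnAt P e n = 1

/-- The chain is positive recurrent at `e` if it is recurrent and the expected return
time `E_e(T_e) = ∑_n Pr_e(T_e > n)` is finite. -/
def PositiveRecurrent {S : Type*} (P : S → S → ℝ≥0∞) (e : S) : Prop :=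
  Recurrent P e ∧ ∑' n : ℕ, survival P e n < ⊤

/-- `n`-step transition probabilities. -/
def stepN {S : Type*} (P : S → S → ℝ≥0∞) : ℕ → S → S → ℝ≥0∞
  | 0, x, y => if x = y then 1 else 0
  | n + 1, x, y => ∑' z : S, P x z * stepN P n z y

variable {S : Type*} [PartialOrder S] [OrderBot S]

/-- An upward run kernel: `P(x,y) > 0` iff `y` covers `x` or `y = e`. -/
def IsUpwardRunKernel (P : S → S → ℝ≥0∞) : Prop :=
  (∀ x : S, ∑' y : S, P x y = 1) ∧ ∀ x y : S, 0 < P x y ↔ (x ⋖ y ∨ y = ⊥)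

/-- A downward run kernel: `Q(e,y) > 0` for all `y`, and for `x ≠ e`,
`Q(x,y) > 0` iff `x` covers `y`. -/
def IsDownwardRunKernel (Q : S → S → ℝ≥0∞) : Prop :=
  (∀ x : S, ∑' y : S, Q x y = 1) ∧ (∀ y : S, 0 < Q ⊥ y) ∧
    ∀ x : S, x ≠ ⊥ → ∀ y : S, (0 < Q x y ↔ y ⋖ x)

/-- Every chain from `⊥` to `x` is finite. -/
def BoundedChainsFinite (S : Type*) [PartialOrder S] [OrderBot S] : Prop :=
  ∀ x : S, ∀ C : Set S, C ⊆ Set.Iic x → IsChain (· ≤ ·) C → C.Finite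

/-- `l` is a covering path from `⊥` ending at `x` (the path is `⊥ :: l`). -/
def IsPathTo (l : List S) (x : S) : Prop :=
  List.Chain (· ⋖ ·) ⊥ l ∧ (⊥ :: l).getLast (List.cons_ne_nil _ _) = x

/-- `x` is at level `n`: some covering path from `⊥` to `x` has length `n`. -/
def InLevel (x : S) (n : ℕ) : Prop :=
  ∃ l : List S, IsPathTo l x ∧ l.length = n


lemma stepN_prepend {S : Type*} (P : S → S → ℝ≥0∞) (n : ℕ) (x z y : S) :
    P x z * stepN P n z y ≤ stepN P (n + 1) x y :=
  ENNReal.le_tsum z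

lemma stepN_append {S : Type*} (P : S → S → ℝ≥0∞) :
    ∀ (n : ℕ) (x z y : S), stepN P n x z * P z y ≤ stepN P (n + 1) x y := by
  intro n
  induction n with
  | zero =>
    intro x z y
    by_cases h : x = z
    · subst h
      simpa [stepN] using stepN_prepend P 0 x y y
    · simp [stepN, h]
  | succ n ih =>
    intro x z y
    show (∑' w, P x w * stepN P n w z) * P z y ≤ ∑' w, P x w * stepN P (n + 1) w y
    rw [← ENNReal.tsum_mul_right]
    refine ENNReal.tsum_le_tsum fun w => ?_
    rw [mul_assoc]
    exact mul_le_mul_right (ih w z y) _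

lemma reach_bot {S : Type*} [PartialOrder S] [OrderBot S]
    (hfin : BoundedChainsFinite S) (P : S → S → ℝ≥0∞) (hP : IsUpwardRunKernel P) (x : S) :
    ∃ n : ℕ, 0 < stepN P n ⊥ x := by
  classical
  obtain ⟨M, hM, -⟩ := (IsChain.empty (r := (· ≤ ·)) (α := Set.Iic x)).exists_maxChain
  -- ⊥ and ⊤ elements of the subtype
  set bb : Set.Iic x := ⟨⊥, bot_le⟩ with hbb
  set tt : Set.Iic x := ⟨x, le_refl x⟩ with htt
  have hbotmem : bb ∈ M := by
    by_contra h
    have hchain : IsChain (· ≤ ·) (insert bb M) :=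
      hM.1.insert fun b _ _ => Or.inl bot_le
    have heq := hM.2 hchain (Set.subset_insert _ _)
    exact h (heq ▸ Set.mem_insert _ _)
  have htopmem : tt ∈ M := by
    by_contra h
    have hchain : IsChain (· ≤ ·) (insert tt M) :=
      hM.1.insert fun b _ _ => Or.inr b.2
    have heq := hM.2 hchain (Set.subset_insert _ _)
    exact h (heq ▸ Set.mem_insert _ _)
  have hfinM : M.Finite := by
    have h1 : (Subtype.val '' M).Finite := by
      refine hfin x _ ?_ (hM.1.image_of_map_rel _ _ Subtype.val fun _ _ h => h)
      rintro _ ⟨a, _, rfl⟩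
      exact a.2
    exact Set.Finite.of_finite_image h1 (Set.injOn_of_injective Subtype.val_injective)
  have key : ∀ k : ℕ, ∀ a : Set.Iic x, a ∈ M → (M ∩ Set.Iio a).ncard ≤ k →
      ∃ n, 0 < stepN P n ⊥ (a : S) := by
    intro k
    induction k with
    | zero =>
      intro a ha hcard
      have hab : a = bb := by
        by_contra hne
        have hne' : (a : S) ≠ ⊥ := fun h => hne (Subtype.ext h)
        have hblt : bb < a := Subtype.coe_lt_coe.1 (bot_lt_iff_ne_bot.mpr hne')
        have hb : bb ∈ M ∩ Set.Iio a := ⟨hbotmem, hblt⟩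
        have hpos : 0 < (M ∩ Set.Iio a).ncard :=
          (Set.ncard_pos (hfinM.inter_of_left _)).2 ⟨_, hb⟩
        omega
      refine ⟨0, ?_⟩
      rw [hab]
      simp [stepN, hbb]
    | succ k ih =>
      intro a ha hcard
      by_cases hb0 : a = bb
      · refine ⟨0, ?_⟩
        rw [hb0]
        simp [stepN, hbb]
      · set Lo := M ∩ Set.Iio a with hLo
        have hLofin : Lo.Finite := hfinM.inter_of_left _
        have hne' : (a : S) ≠ ⊥ := fun h => hb0 (Subtype.ext h)
        have hblt0 : bb < a := Subtype.coe_lt_coe.1 (bot_lt_iff_ne_bot.mpr hne')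
        have hLone : Lo.Nonempty := ⟨bb, hbotmem, hblt0⟩
        obtain ⟨b, hbLo, hbmax'⟩ := Set.Finite.exists_maximalFor id Lo hLofin hLone
        have hbmax : ∀ a' ∈ Lo, id b ≤ id a' → id b = id a' :=
          fun a' h1 h2 => le_antisymm h2 (hbmax' h1 h2)
        have hblt : b < a := hbLo.2
        have hcov : (b : S) ⋖ (a : S) := by
          refine ⟨hblt, fun z hz1 hz2 => ?_⟩
          have hzx : z ≤ x := le_of_lt (lt_of_lt_of_le hz2 a.2)
          set c : Set.Iic x := ⟨z, hzx⟩ with hc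
          have hbc : b < c := hz1
          have hca : c < a := hz2
          have hcM : c ∉ M := by
            intro hcM
            have hcLo : c ∈ Lo := ⟨hcM, hca⟩
            have := hbmax c hcLo (le_of_lt hbc)
            simp only [id] at this
            exact absurd this (ne_of_lt hbc)
          have hchain : IsChain (· ≤ ·) (insert c M) := by
            refine hM.1.insert fun m hm _ => ?_
            by_cases hma : m = a
            · exact Or.inl (hma ▸ le_of_lt hca)
            · rcases hM.1.total hm ha with h1 | h1
              · have hmlt : m < a := lt_of_le_of_ne h1 hma
                have hmLo : m ∈ Lo := ⟨hm, hmlt⟩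
                by_cases hmb : m = b
                · exact Or.inr (hmb ▸ le_of_lt hbc)
                · rcases hM.1.total hm hbLo.1 with h2 | h2
                  · exact Or.inr (le_trans h2 (le_of_lt hbc))
                  · have := hbmax m hmLo h2
                    simp only [id] at this
                    exact Or.inr (this ▸ le_of_lt hbc)
              · exact Or.inl (le_trans (le_of_lt hca) h1)
          have heq := hM.2 hchain (Set.subset_insert _ _)
          exact hcM (heq ▸ Set.mem_insert _ _)
        have hPb : 0 < P (b : S) (a : S) := (hP.2 b a).2 (Or.inl hcov)
        have hsub : M ∩ Set.Iio b ⊂ Lo := by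
          constructor
          · rintro c ⟨hc1, hc2⟩
            exact ⟨hc1, lt_trans hc2 hbLo.2⟩
          · intro hss
            have := hss hbLo
            exact absurd this.2 (lt_irrefl b)
        have hlt : (M ∩ Set.Iio b).ncard < Lo.ncard := Set.ncard_lt_ncard hsub hLofin
        have hle : (M ∩ Set.Iio b).ncard ≤ k := by omega
        obtain ⟨n, hn⟩ := ih b hbLo.1 hle
        refine ⟨n + 1, lt_of_lt_of_le ?_ (stepN_append P n ⊥ b a)⟩
        exact ENNReal.mul_pos (ne_of_gt hn) (ne_of_gt hPb)
  obtain ⟨n, hn⟩ := key _ tt htopmem le_rfl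
  exact ⟨n, hn⟩

/-- an upward run chain on a poset with minimum `⊥` in which every chain
from `⊥` to any `x` is finite is irreducible and aperiodic. -/
theorem upward_run_irreducible_aperiodic {S : Type*} [PartialOrder S] [OrderBot S]
    [Countable S] (hfin : BoundedChainsFinite S)
    (P : S → S → ℝ≥0∞) (hP : IsUpwardRunKernel P) :
    (∀ x y : S, ∃ n : ℕ, 0 < n ∧ 0 < stepN P n x y) ∧
    (∀ x : S, ∀ d : ℕ, (∀ n : ℕ, 0 < n → 0 < stepN P n x x → d ∣ n) → d = 1) := by
  have Pbot : ∀ x : S, 0 < P x ⊥ := fun x => (hP.2 x ⊥).2 (Or.inr rfl)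
  constructor
  · intro x y
    obtain ⟨m, hm⟩ := reach_bot hfin P hP y
    refine ⟨m + 1, Nat.succ_pos _, lt_of_lt_of_le ?_ (stepN_prepend P m x ⊥ y)⟩
    exact ENNReal.mul_pos (ne_of_gt (Pbot x)) (ne_of_gt hm)
  · intro x d hd
    obtain ⟨m, hm⟩ := reach_bot hfin P hP x
    have h1 : 0 < stepN P (m + 1) x x :=
      lt_of_lt_of_le (ENNReal.mul_pos (ne_of_gt (Pbot x)) (ne_of_gt hm))
        (stepN_prepend P m x ⊥ x)
    have hmid : 0 < stepN P (m + 1) ⊥ x :=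
      lt_of_lt_of_le (ENNReal.mul_pos (ne_of_gt (Pbot ⊥)) (ne_of_gt hm))
        (stepN_prepend P m ⊥ ⊥ x)
    have h2 : 0 < stepN P (m + 2) x x :=
      lt_of_lt_of_le (ENNReal.mul_pos (ne_of_gt (Pbot x)) (ne_of_gt hmid))
        (stepN_prepend P (m + 1) x ⊥ x)
    have d1 := hd (m + 1) (Nat.succ_pos _) h1
    have d2 := hd (m + 2) (Nat.succ_pos _) h2
    have hd1 : d ∣ 1 := by
      have := Nat.dvd_sub d2 d1
      simpa using this
    exact Nat.dvd_one.mp hd1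

end
end

section
/- Let X be a recurrent upward run chain on a poset (S, ≼) with minimum e, and define F(x) = Pr_e(T_x ≤ T_e), where T_x = min{n ≥ 1 : X_n = x}. Then F is left-invariant for the transition function P: for all y ∈ S, Σ_x F(x) P(x,y) = F(y). -/
open scoped ENNReal

noncomputable section
open scoped Classical

variable {S : Type*} [PartialOrder S] [OrderBot S]

/-! ### Auxiliary lemmas -/

lemma dropLast_append_getLastD' {α : Type*} :
    ∀ (l : List α) (a : α), l ≠ [] → l.dropLast ++ [l.getLastD a] = l := by
  intro l
  induction l with
  | nil => intro a h; exact absurd rfl h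
  | cons b t ih =>
    intro a _
    cases t with
    | nil => simp
    | cons c t' =>
      rw [List.dropLast_cons_of_ne_nil (by simp), List.getLastD_cons]
      simp only [List.cons_append]
      rw [ih b (by simp)]

lemma wordProb_append_singleton (P : S → S → ℝ≥0∞) :
    ∀ (l : List S) (a y : S),
      wordProb P a (l ++ [y]) = wordProb P a l * P (l.getLastD a) y
  | [], a, y => by simp [wordProb]
  | b :: l, a, y => by
    simp only [List.cons_append, wordProb, List.append_eq, List.getLastD_cons,
      wordProb_append_singleton P l b y, mul_assoc]

lemma chain_of_wordProb_ne_zero (P : S → S → ℝ≥0∞) (hP : IsUpwardRunKernel P) :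
    ∀ (l : List S) (a : S), (⊥ : S) ∉ l → wordProb P a l ≠ 0 →
      List.Chain (· ⋖ ·) a l
  | [], _, _, _ => List.Chain.nil
  | b :: l, a, hb, hw => by
    have h1 : P a b ≠ 0 := fun h0 => hw (by simp [wordProb, h0])
    have h2 : wordProb P b l ≠ 0 := fun h0 => hw (by simp [wordProb, h0])
    have hb1 : b ≠ ⊥ := fun h => hb (h ▸ List.mem_cons_self)
    have hcov : a ⋖ b := ((hP.2 a b).mp (pos_iff_ne_zero.mpr h1)).resolve_right hb1
    exact List.Chain.cons hcov
      (chain_of_wordProb_ne_zero P hP l b (fun h => hb (List.mem_cons_of_mem _ h)) h2)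

lemma path_facts (P : S → S → ℝ≥0∞) (hP : IsUpwardRunKernel P)
    {m : List S} {x : S} (hb : (⊥ : S) ∉ m ++ [x])
    (hw : wordProb P ⊥ (m ++ [x]) ≠ 0) :
    (∀ z ∈ m, z < x) ∧ x ≠ ⊥ := by
  have hch := chain_of_wordProb_ne_zero P hP (m ++ [x]) ⊥ hb hw
  have hpw : List.Pairwise (· < ·) ((⊥ :: m) ++ [x]) := by
    have := List.isChain_iff_pairwise.mp (List.IsChain.imp (fun a b h => h.lt) hch)
    simpa using this
  have h3 := (List.pairwise_append.mp hpw).2.2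
  refine ⟨fun z hz => h3 z (List.mem_cons_of_mem _ hz) x (List.mem_singleton_self x), ?_⟩
  exact (h3 ⊥ List.mem_cons_self x (List.mem_singleton_self x)).ne'

lemma hitProb_tsum (P : S → S → ℝ≥0∞) (x : S) :
    (∑' l : {l : List S // x ∉ l ∧ (⊥ : S) ∉ l}, wordProb P ⊥ (l.1 ++ [x]))
      = ∑' l : List S, if x ∉ l ∧ (⊥ : S) ∉ l then wordProb P ⊥ (l ++ [x]) else 0 := by
  have := tsum_subtype {l : List S | x ∉ l ∧ (⊥ : S) ∉ l}
    (fun l => wordProb P ⊥ (l ++ [x]))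
  exact this.trans (by simp [Set.indicator_apply])

lemma tsum_return_eq (P : S → S → ℝ≥0∞) :
    (∑' n : ℕ, returnAt P (⊥ : S) n)
      = ∑' l : List S, if (⊥ : S) ∉ l then wordProb P ⊥ (l ++ [⊥]) else 0 := by
  have h1 : ∀ n : ℕ, returnAt P (⊥ : S) n
      = ∑' l : List S,
          if l.length = n ∧ (⊥ : S) ∉ l then wordProb P ⊥ (l ++ [⊥]) else 0 := by
    intro n
    have := tsum_subtype {l : List S | l.length = n ∧ (⊥ : S) ∉ l}
      (fun l => wordProb P ⊥ (l ++ [⊥]))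
    exact this.trans (by simp [Set.indicator_apply])
  simp_rw [h1]
  rw [ENNReal.tsum_comm]
  refine tsum_congr fun l => ?_
  have h2 : ∀ n : ℕ,
      (if l.length = n ∧ (⊥ : S) ∉ l then wordProb P ⊥ (l ++ [⊥]) else 0)
        = if n = l.length then
            (if (⊥ : S) ∉ l then wordProb P ⊥ (l ++ [⊥]) else 0) else 0 := by
    intro n
    by_cases h : n = l.length
    · subst h; simp
    · simp [h, Ne.symm h]
  simp_rw [h2]
  exact tsum_ite_eq _ _

lemma hitProb_eq (P : S → S → ℝ≥0∞) (hrec : Recurrent P (⊥ : S)) (x : S) :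
    hitProb P (⊥ : S) x
      = ∑' l : List S, if x ∉ l ∧ (⊥ : S) ∉ l then wordProb P ⊥ (l ++ [x]) else 0 := by
  by_cases hx : x = ⊥
  · subst hx
    rw [hitProb, if_pos rfl]
    simp_rw [and_self]
    rw [← tsum_return_eq P]
    exact hrec.symm
  · rw [hitProb, if_neg hx]
    exact hitProb_tsum P x


/-- for a recurrent upward run chain, the standard function
`F(x) = Pr_e(T_x ≤ T_e)` is left-invariant for `P`. -/
theorem upward_run_F_left_invariant {S : Type*} [PartialOrder S] [OrderBot S]
    [Countable S] (hfin : BoundedChainsFinite S)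
    (P : S → S → ℝ≥0∞) (hP : IsUpwardRunKernel P) (hrec : Recurrent P (⊥ : S)) :
    ∀ y : S, ∑' x : S, hitProb P ⊥ x * P x y = hitProb P ⊥ y := by
  intro y
  simp_rw [hitProb_eq P hrec]
  have hFbot : (∑' l : List S,
      if (⊥ : S) ∉ l ∧ (⊥ : S) ∉ l then wordProb P ⊥ (l ++ [⊥]) else 0) = 1 := by
    simp_rw [and_self]
    rw [← tsum_return_eq P]
    exact hrec
  conv_lhs => rw [ENNReal.tsum_eq_add_tsum_ite (⊥ : S)]
  conv_rhs => rw [ENNReal.tsum_eq_add_tsum_ite ([] : List S)]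
  rw [hFbot, one_mul]
  congr 1
  · simp [wordProb]
  · -- main bijection between contributing paths
    have hG : ∀ x : S,
        (if x = ⊥ then 0 else
          (∑' l : List S, if x ∉ l ∧ (⊥ : S) ∉ l then wordProb P ⊥ (l ++ [x]) else 0)
            * P x y)
          = ∑' l : List S,
              if x ≠ ⊥ ∧ x ∉ l ∧ (⊥ : S) ∉ l then wordProb P ⊥ (l ++ [x]) * P x y
              else 0 := by
      intro x
      by_cases hx : x = ⊥
      · subst hx; simp
      · rw [if_neg hx, ← ENNReal.tsum_mul_right]
        refine tsum_congr fun l => ?_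
        by_cases hc : x ∉ l ∧ (⊥ : S) ∉ l
        · simp [hx, hc]
        · simp [hc]
    simp_rw [hG]
    rw [← ENNReal.tsum_prod]
    refine tsum_eq_tsum_of_ne_zero_bij
      (fun z => (z.1.getLastD ⊥, z.1.dropLast)) ?_ ?_ ?_
    · -- injectivity
      rintro ⟨l₁, h₁⟩ ⟨l₂, h₂⟩ h
      rw [Function.mem_support] at h₁ h₂
      have hne₁ : l₁ ≠ [] := fun h0 => h₁ (by simp [h0])
      have hne₂ : l₂ ≠ [] := fun h0 => h₂ (by simp [h0])
      have e1 : l₁.getLastD ⊥ = l₂.getLastD ⊥ := congrArg Prod.fst h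
      have e2 : l₁.dropLast = l₂.dropLast := congrArg Prod.snd h
      apply Subtype.ext
      show l₁ = l₂
      rw [← dropLast_append_getLastD' l₁ ⊥ hne₁,
        ← dropLast_append_getLastD' l₂ ⊥ hne₂, e1, e2]
    · -- support f ⊆ range i
      rintro ⟨x, l⟩ hp
      rw [Function.mem_support] at hp
      have hc : x ≠ ⊥ ∧ x ∉ l ∧ (⊥ : S) ∉ l := by
        by_contra h; exact hp (if_neg h)
      rw [if_pos hc] at hp
      obtain ⟨hx, hxl, hbl⟩ := hc
      have hwa : wordProb P ⊥ (l ++ [x]) ≠ 0 :=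
        fun h0 => hp (by rw [h0, zero_mul])
      have hPxy : P x y ≠ 0 := fun h0 => hp (by rw [h0, mul_zero])
      have hbl' : (⊥ : S) ∉ l ++ [x] := by
        simp only [List.mem_append, List.mem_singleton]
        rintro (h | h)
        · exact hbl h
        · exact hx h.symm
      have hfacts := path_facts P hP hbl' hwa
      have hy : y ∉ l ++ [x] := by
        rcases (hP.2 x y).mp (pos_iff_ne_zero.mpr hPxy) with hcov | hyb
        · have hxy : x < y := hcov.lt
          simp only [List.mem_append, List.mem_singleton]
          rintro (h | h)
          · exact absurd (lt_trans (hfacts.1 y h) hxy) (lt_irrefl y)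
          · subst h; exact lt_irrefl y hxy
        · subst hyb; exact hbl'
      refine ⟨⟨l ++ [x], ?_⟩, ?_⟩
      · rw [Function.mem_support]
        rw [if_neg (by simp), if_pos ⟨hy, hbl'⟩]
        rw [wordProb_append_singleton, List.getLastD_concat]
        exact hp
      · simp [List.getLastD_concat, List.dropLast_concat]
    · -- values agree
      rintro ⟨l, hl⟩
      rw [Function.mem_support] at hl
      have hne : l ≠ [] := fun h0 => hl (by simp [h0])
      rw [if_neg hne] at hl
      have hcond : y ∉ l ∧ (⊥ : S) ∉ l := by
        by_contra h; exact hl (if_neg h)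
      rw [if_pos hcond] at hl
      have hdec := dropLast_append_getLastD' l ⊥ hne
      have hwl : wordProb P ⊥ l ≠ 0 := by
        rw [wordProb_append_singleton] at hl
        exact fun h0 => hl (by rw [h0, zero_mul])
      have hb2 : (⊥ : S) ∉ l.dropLast ++ [l.getLastD ⊥] := by
        rw [hdec]; exact hcond.2
      have hw2 : wordProb P ⊥ (l.dropLast ++ [l.getLastD ⊥]) ≠ 0 := by
        rw [hdec]; exact hwl
      have hfacts := path_facts P hP hb2 hw2
      have hxm : l.getLastD ⊥ ∉ l.dropLast :=
        fun h => lt_irrefl _ (hfacts.1 _ h)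
      have hbm : (⊥ : S) ∉ l.dropLast :=
        fun h => hb2 (List.mem_append.mpr (Or.inl h))
      simp only
      rw [if_neg hne, if_pos hcond, if_pos ⟨hfacts.2, hxm, hbm⟩]
      rw [wordProb_append_singleton P l ⊥ y, hdec]

end
end

section
/- Let Y be a downward run chain on a poset (S, ≼) satisfying the standing assumptions. Then Y is recurrent: starting at e, the chain returns to e with probability 1. -/
open scoped ENNReal

noncomputable section
open scoped Classical

variable {S : Type*} [PartialOrder S] [OrderBot S]

section Aux
variable {S : Type*} [PartialOrder S] [OrderBot S]

def surv (Q : S → S → ℝ≥0∞) (x : S) (n : ℕ) : ℝ≥0∞ :=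
  ∑' l : {l : List S // l.length = n ∧ (⊥ : S) ∉ l}, wordProb Q x l.1

def retAt (Q : S → S → ℝ≥0∞) (x : S) (n : ℕ) : ℝ≥0∞ :=
  ∑' l : {l : List S // l.length = n ∧ (⊥ : S) ∉ l}, wordProb Q x (l.1 ++ [⊥])

def consEquiv (S : Type*) [PartialOrder S] [OrderBot S] (n : ℕ) :
    ({y : S // y ≠ ⊥} × {l : List S // l.length = n ∧ (⊥ : S) ∉ l}) ≃
      {l : List S // l.length = n + 1 ∧ (⊥ : S) ∉ l} where
  toFun p := ⟨p.1.1 :: p.2.1, by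
    refine ⟨by simp [p.2.2.1], ?_⟩
    simp only [List.mem_cons, not_or]
    exact ⟨fun h => p.1.2 h.symm, p.2.2.2⟩⟩
  invFun l := match l with
    | ⟨[], h⟩ => absurd h.1 (by simp)
    | ⟨y :: l, h⟩ =>
      (⟨y, fun hy => h.2 (hy ▸ List.mem_cons_self (a := y) (l := l))⟩,
       ⟨l, Nat.succ_injective h.1, fun hm => h.2 (List.mem_cons_of_mem _ hm)⟩)
  left_inv := by rintro ⟨⟨y, hy⟩, ⟨l, hl⟩⟩; rfl
  right_inv := by
    rintro ⟨(_ | ⟨y, l⟩), h⟩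
    · exact absurd h.1 (by simp)
    · rfl

lemma surv_zero (Q : S → S → ℝ≥0∞) (x : S) : surv Q x 0 = 1 := by
  rw [surv, tsum_eq_single (⟨[], rfl, by simp⟩ : {l : List S // l.length = 0 ∧ (⊥ : S) ∉ l})]
  · rfl
  · rintro ⟨l, hl⟩ hne
    exact (hne (Subtype.ext (List.length_eq_zero_iff.mp hl.1))).elim

lemma retAt_zero (Q : S → S → ℝ≥0∞) (x : S) : retAt Q x 0 = Q x ⊥ := by
  rw [retAt, tsum_eq_single (⟨[], rfl, by simp⟩ : {l : List S // l.length = 0 ∧ (⊥ : S) ∉ l})]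
  · simp [wordProb]
  · rintro ⟨l, hl⟩ hne
    exact (hne (Subtype.ext (List.length_eq_zero_iff.mp hl.1))).elim

lemma surv_succ (Q : S → S → ℝ≥0∞) (x : S) (n : ℕ) :
    surv Q x (n + 1) = ∑' y : S, if y = ⊥ then 0 else Q x y * surv Q y n := by
  rw [surv, ← Equiv.tsum_eq (consEquiv S n)]
  have h1 : ∀ c : {y : S // y ≠ ⊥} × {l : List S // l.length = n ∧ (⊥ : S) ∉ l},
      wordProb Q x ((consEquiv S n c).1 : List S) = Q x c.1.1 * wordProb Q c.1.1 c.2.1 :=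
    fun c => rfl
  rw [tsum_congr h1,
    ENNReal.tsum_prod (f := fun (a : {y : S // y ≠ ⊥}) (b : {l : List S // l.length = n ∧ (⊥ : S) ∉ l}) => Q x a.1 * wordProb Q a.1 b.1)]
  simp_rw [ENNReal.tsum_mul_left]
  have h2 : ∀ y : {y : S // y ≠ ⊥},
      Q x y.1 * (∑' l : {l : List S // l.length = n ∧ (⊥ : S) ∉ l}, wordProb Q y.1 l.1)
        = (fun z : S => if z = ⊥ then 0 else Q x z * surv Q z n) y.1 :=
    fun y => by simp [y.2, surv]
  rw [tsum_congr h2]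
  exact tsum_subtype_eq_of_support_subset (s := {y : S | y ≠ ⊥})
    (f := fun z : S => if z = ⊥ then 0 else Q x z * surv Q z n) (by
    intro y hy
    by_contra h
    simp only [Set.mem_setOf_eq, not_not] at h
    simp [h] at hy)

lemma retAt_succ (Q : S → S → ℝ≥0∞) (x : S) (n : ℕ) :
    retAt Q x (n + 1) = ∑' y : S, if y = ⊥ then 0 else Q x y * retAt Q y n := by
  rw [retAt, ← Equiv.tsum_eq (consEquiv S n)]
  have h1 : ∀ c : {y : S // y ≠ ⊥} × {l : List S // l.length = n ∧ (⊥ : S) ∉ l},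
      wordProb Q x (((consEquiv S n c).1 : List S) ++ [⊥])
        = Q x c.1.1 * wordProb Q c.1.1 (c.2.1 ++ [⊥]) :=
    fun c => rfl
  rw [tsum_congr h1,
    ENNReal.tsum_prod (f := fun (a : {y : S // y ≠ ⊥}) (b : {l : List S // l.length = n ∧ (⊥ : S) ∉ l}) => Q x a.1 * wordProb Q a.1 (b.1 ++ [⊥]))]
  simp_rw [ENNReal.tsum_mul_left]
  have h2 : ∀ y : {y : S // y ≠ ⊥},
      Q x y.1 * (∑' l : {l : List S // l.length = n ∧ (⊥ : S) ∉ l}, wordProb Q y.1 (l.1 ++ [⊥]))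
        = (fun z : S => if z = ⊥ then 0 else Q x z * retAt Q z n) y.1 :=
    fun y => by simp [y.2, retAt]
  rw [tsum_congr h2]
  exact tsum_subtype_eq_of_support_subset (s := {y : S | y ≠ ⊥})
    (f := fun z : S => if z = ⊥ then 0 else Q x z * retAt Q z n) (by
    intro y hy
    by_contra h
    simp only [Set.mem_setOf_eq, not_not] at h
    simp [h] at hy)

variable {Q : S → S → ℝ≥0∞}

lemma Q_le_one (hrow : ∀ x : S, ∑' y : S, Q x y = 1) (x y : S) : Q x y ≤ 1 :=
  (hrow x) ▸ ENNReal.le_tsum y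

lemma surv_le_one (hrow : ∀ x : S, ∑' y : S, Q x y = 1) : ∀ (n : ℕ) (x : S), surv Q x n ≤ 1
  | 0, x => le_of_eq (surv_zero Q x)
  | n + 1, x => by
    rw [surv_succ]
    calc ∑' y : S, (if y = ⊥ then 0 else Q x y * surv Q y n) ≤ ∑' y : S, Q x y := by
          refine ENNReal.tsum_le_tsum fun y => ?_
          split_ifs
          · exact zero_le
          · calc Q x y * surv Q y n ≤ Q x y * 1 := by
                  gcongr; exact surv_le_one hrow n y
              _ = Q x y := mul_one _
      _ = 1 := hrow x

lemma surv_succ_le (hrow : ∀ x : S, ∑' y : S, Q x y = 1) :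
    ∀ (n : ℕ) (x : S), surv Q x (n + 1) ≤ surv Q x n
  | 0, x => (surv_zero Q x) ▸ surv_le_one hrow 1 x
  | n + 1, x => by
    rw [surv_succ, surv_succ]
    refine ENNReal.tsum_le_tsum fun y => ?_
    split_ifs
    · exact le_refl _
    · gcongr
      exact surv_succ_le hrow n y

lemma key_identity (hrow : ∀ x : S, ∑' y : S, Q x y = 1) :
    ∀ (n : ℕ) (x : S), surv Q x n + ∑ k ∈ Finset.range n, retAt Q x k = 1
  | 0, x => by simp [surv_zero]
  | n + 1, x => by
    rw [Finset.sum_range_succ', retAt_zero, surv_succ]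
    simp_rw [retAt_succ]
    rw [← Summable.tsum_finsetSum (fun k _ => ENNReal.summable)]
    rw [← add_assoc, ← ENNReal.tsum_add]
    have h : ∀ y : S,
        ((if y = ⊥ then 0 else Q x y * surv Q y n)
          + ∑ k ∈ Finset.range n, (if y = ⊥ then 0 else Q x y * retAt Q y k))
        = (if y = ⊥ then 0 else Q x y) := by
      intro y
      by_cases hy : y = ⊥
      · simp [hy]
      · simp only [if_neg hy]
        rw [← Finset.mul_sum, ← mul_add, key_identity hrow n y, mul_one]
    rw [tsum_congr h, add_comm, ← ENNReal.summable.tsum_eq_add_tsum_ite' ⊥, hrow x]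

end Aux

section Main
variable {S : Type*} [PartialOrder S] [OrderBot S]

def BCF_aux (S : Type*) [PartialOrder S] [OrderBot S] : Prop :=
  ∀ x : S, ∀ C : Set S, C ⊆ Set.Iic x → IsChain (· ≤ ·) C → C.Finite

lemma wf_of_bcf (hfin : BCF_aux S) :
    WellFounded ((· < ·) : S → S → Prop) := by
  rw [RelEmbedding.wellFounded_iff_isEmpty]
  constructor
  intro f
  have hmono : ∀ m n : ℕ, m < n → f n < f m := fun m n h => f.map_rel_iff.2 h
  have hsub : Set.range (fun n => f n) ⊆ Set.Iic (f 0) := by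
    rintro _ ⟨n, rfl⟩
    rcases Nat.eq_zero_or_pos n with h | h
    · simp [h]
    · exact le_of_lt (hmono 0 n h)
  have hchain : IsChain (· ≤ ·) (Set.range fun n => f n) := by
    rintro _ ⟨m, rfl⟩ _ ⟨n, rfl⟩ _
    rcases lt_trichotomy m n with h | h | h
    · exact Or.inr (le_of_lt (hmono m n h))
    · exact Or.inl (le_of_eq (by rw [h]))
    · exact Or.inl (le_of_lt (hmono n m h))
  exact (hfin (f 0) _ hsub hchain).not_infinite
    (Set.infinite_range_of_injective f.injective)

variable {Q : S → S → ℝ≥0∞}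

lemma dc_step (hrow : ∀ x : S, ∑' y : S, Q x y = 1) (x : S)
    (h : ∀ y : S, y ≠ ⊥ → Q x y ≠ 0 → (⨅ n, surv Q y n) = 0) :
    (⨅ n, surv Q x n) = 0 := by
  classical
  have hshift : (⨅ n, surv Q x n) = ⨅ n, surv Q x (n + 1) :=
    le_antisymm (le_iInf fun n => iInf_le _ (n + 1))
      (le_iInf fun n => (iInf_le _ n).trans (surv_succ_le hrow n x))
  rw [hshift]
  simp_rw [surv_succ]
  letI : MeasurableSpace S := ⊤
  haveI : MeasurableSingletonClass S := ⟨fun _ => trivial⟩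
  set F : ℕ → S → ℝ≥0∞ := fun n y => if y = ⊥ then 0 else Q x y * surv Q y n with hF
  have hFle : ∀ n y, F n y ≤ Q x y := by
    intro n y
    simp only [hF]
    split_ifs
    · exact zero_le
    · calc Q x y * surv Q y n ≤ Q x y * 1 := by gcongr; exact surv_le_one hrow n y
        _ = Q x y := mul_one _
  have hmeas : ∀ n, Measurable (F n) := fun n s hs => trivial
  have hanti : Antitone F := by
    intro m n hmn y
    simp only [hF]
    split_ifs
    · exact le_refl _
    · gcongr
      have hm : ∀ k l : ℕ, k ≤ l → surv Q y l ≤ surv Q y k := by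
        intro k l hkl
        induction hkl with
        | refl => exact le_refl _
        | step _ ih => exact (surv_succ_le hrow _ y).trans ih
      exact hm m n hmn
  have hfin0 : ∫⁻ y, F 0 y ∂(MeasureTheory.Measure.count) ≠ ⊤ := by
    rw [MeasureTheory.lintegral_count]
    refine ne_top_of_le_ne_top (by simp [hrow x]) (ENNReal.tsum_le_tsum fun y => hFle 0 y)
  have swap := MeasureTheory.lintegral_iInf hmeas hanti hfin0
  simp_rw [MeasureTheory.lintegral_count] at swap
  rw [show (⨅ n, ∑' y : S, if y = ⊥ then 0 else Q x y * surv Q y n)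
      = ⨅ n, ∑' y : S, F n y from rfl, ← swap]
  have hzero : ∀ y : S, (⨅ n, F n y) = 0 := by
    intro y
    by_cases hy : y = ⊥
    · simp [hF, hy]
    · by_cases hq : Q x y = 0
      · simp [hF, hy, hq]
      · refine le_antisymm ?_ (zero_le)
        rw [← h y hy hq]
        refine le_iInf fun n => (iInf_le _ n).trans ?_
        simp only [hF, if_neg hy]
        calc Q x y * surv Q y n ≤ 1 * surv Q y n := by
              gcongr; exact Q_le_one hrow x y
          _ = surv Q y n := one_mul _
  simp_rw [hzero]
  simp

end Main

lemma BCF_aux_of (S : Type*) [PartialOrder S] [OrderBot S] (h : BoundedChainsFinite S) :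
    BCF_aux S := h

/-- a downward run chain is always recurrent. -/
theorem downward_run_recurrent {S : Type*} [PartialOrder S] [OrderBot S]
    [Countable S] (hfin : BoundedChainsFinite S)
    (Q : S → S → ℝ≥0∞) (hQ : IsDownwardRunKernel Q) :
    Recurrent Q (⊥ : S) := by
  obtain ⟨hrow, hbot, hcov⟩ := hQ
  have wf := wf_of_bcf (S := S) (BCF_aux_of S hfin)
  have main : ∀ x : S, x ≠ ⊥ → (⨅ n, surv Q x n) = 0 := by
    intro x
    refine wf.induction (C := fun z => z ≠ ⊥ → (⨅ n, surv Q z n) = 0) x ?_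
    intro z ih hz
    refine dc_step hrow z fun y hy hq => ?_
    have hlt : y ⋖ z := (hcov z hz y).1 (pos_iff_ne_zero.2 hq)
    exact ih y hlt.lt hy
  have hbot0 : (⨅ n, surv Q (⊥ : S) n) = 0 := dc_step hrow ⊥ fun y hy _ => main y hy
  show ∑' n : ℕ, returnAt Q (⊥ : S) n = 1
  have hkey : ∀ n : ℕ, surv Q (⊥ : S) n + ∑ k ∈ Finset.range n, returnAt Q (⊥ : S) k = 1 :=
    fun n => key_identity hrow n ⊥
  rw [ENNReal.tsum_eq_iSup_nat]
  apply le_antisymm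
  · exact iSup_le fun n => le_add_self.trans (le_of_eq (hkey n))
  · set C := ⨆ n : ℕ, ∑ k ∈ Finset.range n, returnAt Q (⊥ : S) k with hC
    have h1 : ∀ n : ℕ, (1 : ℝ≥0∞) - C ≤ surv Q (⊥ : S) n := by
      intro n
      refine tsub_le_iff_right.2 ?_
      calc (1 : ℝ≥0∞) = surv Q (⊥ : S) n + ∑ k ∈ Finset.range n, returnAt Q (⊥ : S) k :=
            (hkey n).symm
        _ ≤ surv Q (⊥ : S) n + C :=
            add_le_add_right (le_iSup (fun m : ℕ => ∑ k ∈ Finset.range m, returnAt Q (⊥ : S) k) n) _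
    have h2 : (1 : ℝ≥0∞) - C ≤ 0 := hbot0 ▸ le_iInf h1
    exact tsub_eq_zero_iff_le.mp (le_antisymm h2 (zero_le))

end
end

section
/- Suppose the covering graph of (S, ≼) is a rooted tree with root e, and X is an upward run chain with kernel P. For x ∈ S with unique path e = x_0, x_1, ..., x_n = x from e to x, the standard invariant function satisfies F(x) = P(e,x_1) P(x_1,x_2) ⋯ P(x_{n-1}, x). -/
open scoped ENNReal

noncomputable section
open scoped Classical

variable {S : Type*} [PartialOrder S] [OrderBot S]

section Aux

lemma wordProb_chain {S : Type*} {P : S → S → ℝ≥0∞} :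
    ∀ {a : S} {l : List S}, wordProb P a l ≠ 0 →
      List.Chain (fun u v => 0 < P u v) a l := by
  intro a l
  induction l generalizing a with
  | nil => intro _; exact List.Chain.nil
  | cons y l ih =>
    intro h
    rw [wordProb, mul_ne_zero_iff] at h
    exact List.Chain.cons (pos_iff_ne_zero.2 h.1) (ih h.2)

lemma getLast_cons_concat {α : Type*} :
    ∀ (m : List α) (a y : α), (a :: (m ++ [y])).getLast (List.cons_ne_nil _ _) = y := by
  intro m
  induction m with
  | nil => intro a y; rfl
  | cons c m ih =>
    intro a y
    rw [List.cons_append, List.getLast_cons (List.cons_ne_nil _ _)]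
    exact ih c y

lemma chain_concat_iff {α : Type*} {R : α → α → Prop} :
    ∀ {a : α} {l : List α} {b : α}, List.Chain R a (l ++ [b]) ↔
      List.Chain R a l ∧ R ((a :: l).getLast (List.cons_ne_nil _ _)) b := by
  intro a l b
  induction l generalizing a with
  | nil => simp [List.Chain, List.isChain_pair]
  | cons c l ih =>
    simp only [List.Chain] at ih ⊢
    simp only [List.cons_append, List.isChain_cons_cons, ih, List.getLast_cons (List.cons_ne_nil _ _),
      and_assoc]

lemma chain_mem_imp {α : Type*} {R R' : α → α → Prop} :
    ∀ {a : α} {l : List α}, List.Chain R a l →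
      (∀ c, ∀ b ∈ l, R c b → R' c b) → List.Chain R' a l := by
  intro a l
  induction l generalizing a with
  | nil => intro _ _; exact List.Chain.nil
  | cons y l ih =>
    intro h hm
    rw [List.Chain, List.isChain_cons_cons] at h
    exact List.Chain.cons (hm _ _ List.mem_cons_self h.1)
      (ih h.2 fun c b hb => hm c b (List.mem_cons_of_mem _ hb))

lemma chain_bot_lt {S : Type*} [PartialOrder S] [OrderBot S] {l : List S}
    (h : List.Chain (· ⋖ ·) ⊥ l) : List.Pairwise (· < ·) (⊥ :: l) :=
  List.isChain_iff_pairwise.mp (List.IsChain.imp (fun _ _ hc => hc.lt) h)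

lemma path_unique {S : Type*} [PartialOrder S] [OrderBot S]
    (htree : ∀ x : S, x ≠ ⊥ → ∃! w : S, w ⋖ x) :
    ∀ (l₁ l₂ : List S), List.Chain (· ⋖ ·) ⊥ l₁ → List.Chain (· ⋖ ·) ⊥ l₂ →
      (⊥ :: l₁).getLast (List.cons_ne_nil _ _) = (⊥ :: l₂).getLast (List.cons_ne_nil _ _) →
      l₁ = l₂ := by
  intro l₁
  induction l₁ using List.reverseRecOn with
  | nil =>
    intro l₂ _ h₂ heq
    obtain rfl | ⟨m, y, hly⟩ := l₂.eq_nil_or_concat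
    · rfl
    · exfalso
      rw [List.concat_eq_append] at hly; subst hly
      have hy : (⊥ : S) < y :=
        (List.pairwise_cons.mp (chain_bot_lt h₂)).1 y (by simp)
      rw [getLast_cons_concat] at heq
      simp only [List.getLast_singleton] at heq
      exact absurd (heq ▸ hy) (lt_irrefl _)
  | append_singleton m₁ y₁ ih =>
    intro l₂ h₁ h₂ heq
    obtain rfl | ⟨m₂, y₂, hly⟩ := l₂.eq_nil_or_concat
    · exfalso
      have hy : (⊥ : S) < y₁ :=
        (List.pairwise_cons.mp (chain_bot_lt h₁)).1 y₁ (by simp)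
      rw [getLast_cons_concat] at heq
      simp only [List.getLast_singleton] at heq
      exact absurd (heq ▸ hy) (lt_irrefl _)
    · rw [List.concat_eq_append] at hly; subst hly
      rw [getLast_cons_concat, getLast_cons_concat] at heq
      subst heq
      rw [chain_concat_iff] at h₁ h₂
      have hyne : y₁ ≠ ⊥ := by
        have hlt : ((⊥ :: m₁).getLast (List.cons_ne_nil _ _)) < y₁ := h₁.2.lt
        intro hb
        exact absurd (hb ▸ hlt) (by simp)
      obtain ⟨w, _, hw⟩ := htree y₁ hyne
      have hpred : (⊥ :: m₁).getLast (List.cons_ne_nil _ _)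
          = (⊥ :: m₂).getLast (List.cons_ne_nil _ _) := by
        rw [hw _ h₁.2, hw _ h₂.2]
      rw [ih m₂ h₁.1 h₂.1 hpred]

end Aux


/-- on a rooted tree, `F(x)` is the product of the one-step transition
probabilities along the unique covering path from `⊥` to `x`. -/
theorem tree_F_eq_path_product {S : Type*} [PartialOrder S] [OrderBot S]
    [Countable S] (hfin : BoundedChainsFinite S)
    (htree : ∀ x : S, x ≠ ⊥ → ∃! w : S, w ⋖ x)
    (P : S → S → ℝ≥0∞) (hP : IsUpwardRunKernel P) :
    ∀ (x : S) (l : List S), IsPathTo l x → hitProb P ⊥ x = wordProb P ⊥ l := by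
  intro x l hl
  obtain ⟨hchain, hlast⟩ := hl
  by_cases hx : x = ⊥
  · subst hx
    obtain rfl | ⟨m, y, hly⟩ := l.eq_nil_or_concat
    · simp [hitProb, wordProb]
    · exfalso
      rw [List.concat_eq_append] at hly; subst hly
      have hy : (⊥ : S) < y :=
        (List.pairwise_cons.mp (chain_bot_lt hchain)).1 y (by simp)
      rw [getLast_cons_concat] at hlast
      exact absurd (hlast ▸ hy) (lt_irrefl _)
  · obtain rfl | ⟨m, y, hly⟩ := l.eq_nil_or_concat
    · exact absurd hlast.symm hx
    · rw [List.concat_eq_append] at hly; subst hly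
      rw [getLast_cons_concat] at hlast
      subst hlast
      have hpw := chain_bot_lt hchain
      have hbm : (⊥ : S) ∉ m := by
        intro hmem
        have := (List.pairwise_cons.mp hpw).1 ⊥ (by simp [hmem])
        exact absurd this (lt_irrefl _)
      have hxm : y ∉ m := by
        intro hmem
        have hp2 := (List.pairwise_cons.mp hpw).2
        rw [List.pairwise_append] at hp2
        have := hp2.2.2 y hmem y (by simp)
        exact absurd this (lt_irrefl _)
      rw [hitProb, if_neg hx]
      refine tsum_eq_single (⟨m, hxm, hbm⟩ : {l : List S // y ∉ l ∧ ⊥ ∉ l}) ?_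
      rintro ⟨l', hxl', hbl'⟩ hne
      by_contra h0
      have hch := wordProb_chain h0
      have hcov : List.Chain (· ⋖ ·) ⊥ (l' ++ [y]) := by
        refine chain_mem_imp hch ?_
        intro c b hb hpos
        rcases (hP.2 c b).mp hpos with h | h
        · exact h
        · exfalso
          subst h
          rcases List.mem_append.mp hb with h | h
          · exact hbl' h
          · exact hx (List.mem_singleton.mp h).symm
      have heq : l' ++ [y] = m ++ [y] := by
        apply path_unique htree _ _ hcov hchain
        rw [getLast_cons_concat, getLast_cons_concat]
      have hlm : l' = m := by
        simpa using List.append_inj_left' heq rfl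
      exact hne (Subtype.ext hlm)

end
end

section
/- Suppose the covering graph of (S, ≼) is a rooted tree and Y is a downward run chain with kernel Q. Then Q(x, x⁻) = 1 for x ≠ e, and the standard invariant function is G(x) = Σ_{y ≽ x} Q(e,y), i.e., G is the upper probability function of Y_1 given Y_0 = e. -/
open scoped ENNReal

noncomputable section
open scoped Classical

variable {S : Type*} [PartialOrder S] [OrderBot S]

section Aux

/-- `y :: l` is a strictly descending covering word from `y` down to `x`. -/
inductive DownTo (x : S) : S → List S → Prop
  | nil : DownTo x x []
  | cons {y w : S} {l : List S} : w ⋖ y → DownTo x w l → DownTo x y (w :: l)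

lemma DownTo.le {x y : S} {l : List S} (h : DownTo x y l) : x ≤ y := by
  induction h with
  | nil => exact le_rfl
  | cons hc _ ih => exact ih.trans hc.le

lemma q_one (htree : ∀ x : S, x ≠ ⊥ → ∃! w : S, w ⋖ x) {Q : S → S → ℝ≥0∞} (hQ : IsDownwardRunKernel Q) {x : S} (hx : x ≠ ⊥)
    {w : S} (hw : w ⋖ x) : Q x w = 1 := by
  have h0 : ∀ y, y ≠ w → Q x y = 0 := by
    intro y hy
    by_contra h
    have hpos : 0 < Q x y := pos_iff_ne_zero.mpr h
    have hcov := (hQ.2.2 x hx y).mp hpos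
    obtain ⟨u, _, huniq⟩ := htree x hx
    exact hy ((huniq y hcov).trans (huniq w hw).symm)
  have h1 := hQ.1 x
  rwa [tsum_eq_single w h0] at h1

lemma downTo_unique (htree : ∀ x : S, x ≠ ⊥ → ∃! w : S, w ⋖ x) {x : S} : ∀ {y : S} {l₁ l₂ : List S},
    DownTo x y l₁ → DownTo x y l₂ → l₁ = l₂ := by
  intro y l₁ l₂ h1 h2
  induction h1 generalizing l₂ with
  | nil =>
    cases h2 with
    | nil => rfl
    | cons hc h' => exact absurd h'.le hc.lt.not_ge
  | @cons y w l hc h ih =>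
    cases h2 with
    | nil => exact absurd h.le hc.lt.not_ge
    | @cons _ w' l' hc' h' =>
      have hyb : y ≠ ⊥ := fun hy => by simp [hy] at hc
      obtain ⟨u, _, huniq⟩ := htree y hyb
      have : w' = w := (huniq w' hc').trans (huniq w hc).symm
      subst this
      rw [ih h']

lemma le_of_lt_covby (htree : ∀ x : S, x ≠ ⊥ → ∃! w : S, w ⋖ x) (hfin : BoundedChainsFinite S)
    {x y w : S} (hxy : x < y) (hw : w ⋖ y) : x ≤ w := by
  have hchain0 : IsChain (· ≤ ·) ({x, y} : Set S) := by
    intro a ha b hb hne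
    rcases ha with rfl | ha <;> rcases hb with rfl | hb
    · exact absurd rfl hne
    · rw [Set.mem_singleton_iff] at hb; subst hb; exact Or.inl hxy.le
    · rw [Set.mem_singleton_iff] at ha; subst ha; exact Or.inr hxy.le
    · rw [Set.mem_singleton_iff] at ha hb; subst ha; subst hb; exact absurd rfl hne
  obtain ⟨t, htmax, hst⟩ := hchain0.exists_maxChain
  have hxt : x ∈ t := hst (Set.mem_insert _ _)
  have hyt : y ∈ t := hst (Set.mem_insert_of_mem _ rfl)
  set B : Set S := (t ∩ Set.Icc x y) \ {y} with hBdef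
  have hBt : B ⊆ t := fun z hz => hz.1.1
  have hBfin : B.Finite := hfin y B (fun z hz => hz.1.2.2) (htmax.1.mono hBt)
  have hxB : x ∈ B := ⟨⟨hxt, le_rfl, hxy.le⟩, by simp [hxy.ne]⟩
  obtain ⟨c, hcB, hcmax⟩ := hBfin.exists_maximal ⟨x, hxB⟩
  have hgreat : ∀ b ∈ B, b ≤ c := by
    intro b hb
    rcases eq_or_ne b c with rfl | hne
    · exact le_rfl
    · rcases htmax.1 (hBt hb) (hBt hcB) hne with h | h
      · exact h
      · exact hcmax hb h
  have hcy : c < y := lt_of_le_of_ne hcB.1.2.2 (by simpa using hcB.2)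
  have hxc : x ≤ c := hgreat x hxB
  have hcov : c ⋖ y := by
    refine ⟨hcy, fun d hcd hdy => ?_⟩
    have hdt : d ∉ t := by
      intro hdt
      have hdB : d ∈ B := ⟨⟨hdt, hxc.trans hcd.le, hdy.le⟩, by simp [hdy.ne]⟩
      exact absurd (hgreat d hdB) hcd.not_ge
    have hins : IsChain (· ≤ ·) (insert d t) := by
      refine htmax.1.insert (fun z hz _ => ?_)
      by_cases hzc : z ≤ c
      · exact Or.inr (hzc.trans hcd.le)
      · have hcz : c < z := by
          rcases eq_or_ne z c with rfl | hne
          · exact absurd le_rfl hzc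
          · rcases htmax.1 hz (hBt hcB) hne with h | h
            · exact absurd h hzc
            · exact lt_of_le_of_ne h (Ne.symm hne)
        rcases eq_or_ne z y with rfl | hzy
        · exact Or.inl hdy.le
        · rcases htmax.1 hz hyt hzy with h | h
          · exact absurd (hgreat z ⟨⟨hz, hxc.trans hcz.le, h⟩, hzy⟩) hzc
          · exact Or.inl (hdy.le.trans h)
    have := htmax.2 hins (Set.subset_insert _ _)
    exact hdt (this ▸ Set.mem_insert d t)
  have hyb : y ≠ ⊥ := fun h => not_lt_bot (h ▸ hxy)
  obtain ⟨u, _, huniq⟩ := htree y hyb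
  have : c = w := (huniq c hcov).trans (huniq w hw).symm
  exact this ▸ hxc

lemma downTo_exists (htree : ∀ x : S, x ≠ ⊥ → ∃! w : S, w ⋖ x) (hfin : BoundedChainsFinite S)
    {x y : S} (hxy : x ≤ y) : ∃ l, DownTo x y l := by
  by_contra hcon
  have step : ∀ z : {z : S // x ≤ z ∧ z ≤ y ∧ ¬∃ l, DownTo x z l},
      ∃ w : {z : S // x ≤ z ∧ z ≤ y ∧ ¬∃ l, DownTo x z l}, w.1 < z.1 := by
    rintro ⟨z, hxz, hzy, hz⟩
    have hne : z ≠ x := by rintro rfl; exact hz ⟨[], DownTo.nil⟩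
    have hxz' : x < z := lt_of_le_of_ne hxz (Ne.symm hne)
    have hzbot : z ≠ ⊥ := fun h => not_lt_bot (h ▸ hxz')
    obtain ⟨w, hw, -⟩ := htree z hzbot
    have hxw : x ≤ w := le_of_lt_covby htree hfin hxz' hw
    refine ⟨⟨w, hxw, hw.le.trans hzy, ?_⟩, hw.lt⟩
    rintro ⟨l, hl⟩
    exact hz ⟨w :: l, DownTo.cons hw hl⟩
  choose f hf using step
  let g : ℕ → {z : S // x ≤ z ∧ z ≤ y ∧ ¬∃ l, DownTo x z l} :=
    fun n => n.rec ⟨y, hxy, le_rfl, hcon⟩ (fun _ z => f z)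
  have hanti : StrictAnti fun n => (g n).1 := strictAnti_nat_of_succ_lt fun n => hf (g n)
  have hchain : IsChain (· ≤ ·) (Set.range fun n => (g n).1) := by
    rintro _ ⟨m, rfl⟩ _ ⟨n, rfl⟩ hne
    rcases lt_trichotomy m n with h | h | h
    · exact Or.inr (hanti h).le
    · exact (hne (by rw [h])).elim
    · exact Or.inl (hanti h).le
  have hsub : Set.range (fun n => (g n).1) ⊆ Set.Iic y := by
    rintro _ ⟨n, rfl⟩; exact (g n).2.2.1
  exact Set.infinite_range_of_injective hanti.injective (hfin y _ hsub hchain)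

lemma downTo_wordProb (htree : ∀ x : S, x ≠ ⊥ → ∃! w : S, w ⋖ x) {Q : S → S → ℝ≥0∞} (hQ : IsDownwardRunKernel Q)
    {x y : S} {l : List S} (h : DownTo x y l) : wordProb Q y l = 1 := by
  induction h with
  | nil => rfl
  | @cons y w l hc _ ih =>
    have hyb : y ≠ ⊥ := fun h => not_lt_bot (h ▸ hc.lt)
    rw [wordProb, ih, mul_one]
    exact q_one htree hQ hyb hc

lemma chain_of_wordProb {Q : S → S → ℝ≥0∞} (hQ : IsDownwardRunKernel Q) :
    ∀ (l : List S) (y : S), y ≠ ⊥ → ⊥ ∉ l → wordProb Q y l ≠ 0 →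
      List.Chain (fun a b => b ⋖ a) y l := by
  intro l
  induction l with
  | nil => intro y _ _ _; exact List.Chain.nil
  | cons w l ih =>
    intro y hy hbot hw
    rw [wordProb] at hw
    have h1 : Q y w ≠ 0 := fun h => hw (by simp [h])
    have h2 : wordProb Q w l ≠ 0 := fun h => hw (by simp [h])
    have hcov : w ⋖ y := (hQ.2.2 y hy w).mp (pos_iff_ne_zero.mpr h1)
    have hwbot : w ≠ ⊥ := fun h => hbot (h ▸ List.mem_cons_self)
    exact List.Chain.cons hcov (ih w hwbot (fun h => hbot (List.mem_cons_of_mem _ h)) h2)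

lemma downTo_of_chain {x : S} : ∀ (l : List S) (y : S), List.Chain (fun a b => b ⋖ a) y l →
    (y :: l).getLast (List.cons_ne_nil _ _) = x → DownTo x y l := by
  intro l
  induction l with
  | nil => intro y _ hl; simp at hl; exact hl ▸ DownTo.nil
  | cons w l ih =>
    intro y hch hl
    rcases List.chain_cons.mp hch with ⟨hc, hch'⟩
    rw [List.getLast_cons (List.cons_ne_nil _ _)] at hl
    exact DownTo.cons hc (ih w hch' hl)

lemma downTo_dropLast {x : S} : ∀ {y : S} {l : List S}, DownTo x y l →
    (y :: l).dropLast ++ [x] = y :: l := by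
  intro y l h
  induction h with
  | nil => rfl
  | @cons y w l _ _ ih =>
    show (y :: w :: l).dropLast ++ [x] = _
    rw [List.dropLast_cons₂, List.cons_append, ih]

lemma downTo_mem_le {x : S} : ∀ {y : S} {l : List S}, DownTo x y l →
    ∀ z ∈ y :: l, x ≤ z := by
  intro y l h
  induction h with
  | nil => intro z hz; simp at hz; exact hz ▸ le_rfl
  | @cons y w l hc h ih =>
    intro z hz
    rcases List.mem_cons.mp hz with rfl | hz
    · exact (h.le.trans hc.le)
    · exact ih z hz

lemma downTo_not_mem_dropLast {x : S} : ∀ {y : S} {l : List S}, DownTo x y l →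
    x ∉ (y :: l).dropLast := by
  intro y l h
  induction h with
  | nil => simp
  | @cons y w l hc h ih =>
    rw [show (y :: w :: l).dropLast = y :: (w :: l).dropLast from List.dropLast_cons₂ .. ]
    intro hmem
    rcases List.mem_cons.mp hmem with rfl | hmem
    · exact absurd (h.le.trans_lt hc.lt) (lt_irrefl _)
    · exact ih hmem

end Aux

/-- on a rooted tree, a downward run chain satisfies `Q(x, x⁻) = 1` for
`x ≠ ⊥`, and its standard invariant function is the upper probability function of `Y₁`
given `Y₀ = ⊥`: `G(x) = ∑_{y ≥ x} Q(⊥, y)`. -/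
theorem tree_downward_run {S : Type*} [PartialOrder S] [OrderBot S]
    [Countable S] (hfin : BoundedChainsFinite S)
    (htree : ∀ x : S, x ≠ ⊥ → ∃! w : S, w ⋖ x)
    (Q : S → S → ℝ≥0∞) (hQ : IsDownwardRunKernel Q) :
    (∀ x : S, x ≠ ⊥ → ∀ w : S, w ⋖ x → Q x w = 1) ∧
    (∀ x : S, hitProb Q ⊥ x = ∑' y : {y : S // x ≤ y}, Q ⊥ y.1) := by
  refine ⟨fun x hx w hw => q_one htree hQ hx hw, fun x => ?_⟩
  by_cases hx : x = ⊥
  · subst hx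
    rw [hitProb, if_pos rfl]
    calc (1 : ℝ≥0∞) = ∑' y : S, Q ⊥ y := (hQ.1 ⊥).symm
      _ = ∑' y : {y : S // ⊥ ≤ y}, Q ⊥ y.1 :=
        ((Equiv.subtypeUnivEquiv fun _ => bot_le).tsum_eq (fun y => Q ⊥ y)).symm
  · rw [hitProb, if_neg hx]
    have hex : ∀ y : {y : S // x ≤ y}, ∃ l, DownTo x y.1 l :=
      fun y => downTo_exists htree hfin y.2
    choose c hc using hex
    set F : {l : List S // x ∉ l ∧ ⊥ ∉ l} → ℝ≥0∞ :=
      fun l => wordProb Q ⊥ (l.1 ++ [x]) with hF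
    set g : {y : S // x ≤ y} → ℝ≥0∞ := fun y => Q ⊥ y.1 with hg
    have hmem : ∀ y : {y : S // x ≤ y},
        x ∉ (y.1 :: c y).dropLast ∧ ⊥ ∉ (y.1 :: c y).dropLast := by
      intro y
      refine ⟨downTo_not_mem_dropLast (hc y), fun hb => ?_⟩
      have hble : x ≤ ⊥ := downTo_mem_le (hc y) ⊥ (List.dropLast_sublist _ |>.mem hb)
      exact hx (le_bot_iff.mp hble)
    let i : Function.support g → {l : List S // x ∉ l ∧ ⊥ ∉ l} :=
      fun y => ⟨(y.1.1 :: c y.1).dropLast, (hmem y.1).1, (hmem y.1).2⟩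
    have hword : ∀ y : {y : S // x ≤ y}, (y.1 :: c y).dropLast ++ [x] = y.1 :: c y :=
      fun y => downTo_dropLast (hc y)
    refine tsum_eq_tsum_of_ne_zero_bij i ?_ ?_ ?_
    · -- injective
      intro a b h
      have h' : (a.1.1 :: c a.1).dropLast = (b.1.1 :: c b.1).dropLast := congrArg Subtype.val h
      have h2 : a.1.1 :: c a.1 = b.1.1 :: c b.1 := by
        rw [← hword a.1, ← hword b.1, h']
      exact Subtype.ext (Subtype.ext (List.head_eq_of_cons_eq h2 : a.1.1 = b.1.1))
    · -- support F ⊆ range i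
      rintro ⟨m, hxm, hbm⟩ hFl
      have hm : wordProb Q ⊥ (m ++ [x]) ≠ 0 := hFl
      have hbW : ⊥ ∉ m ++ [x] := by
        intro hb
        rcases List.mem_append.mp hb with h | h
        · exact hbm h
        · simp only [List.mem_singleton] at h
          exact hx h.symm
      obtain ⟨y, t, hyt⟩ : ∃ y t, m ++ [x] = y :: t := by
        cases m with
        | nil => exact ⟨x, [], rfl⟩
        | cons a m' => exact ⟨a, m' ++ [x], rfl⟩
      rw [hyt] at hm hbW
      have hyb : y ≠ ⊥ := fun h => hbW (h ▸ List.mem_cons_self)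
      have h2 : wordProb Q y t ≠ 0 := by
        intro h
        apply hm
        rw [wordProb, h, mul_zero]
      have hch : List.Chain (fun a b => b ⋖ a) y t :=
        chain_of_wordProb hQ t y hyb (fun h => hbW (List.mem_cons_of_mem _ h)) h2
      have hlast : (y :: t).getLast (List.cons_ne_nil _ _) = x := by
        have h5 : (y :: t).getLast? = some x := by
          rw [← hyt]; exact List.getLast?_concat
        rw [List.getLast?_eq_getLast (List.cons_ne_nil _ _)] at h5
        exact Option.some_injective _ h5
      have hdt : DownTo x y t := downTo_of_chain (y :: t).tail y hch hlast
      have hle : x ≤ y := hdt.le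
      refine ⟨⟨⟨y, hle⟩, ?_⟩, ?_⟩
      · simp only [Function.mem_support, hg]
        exact (hQ.2.1 y).ne'
      · apply Subtype.ext
        show (y :: c ⟨y, hle⟩).dropLast = m
        have : c ⟨y, hle⟩ = t := downTo_unique htree (hc ⟨y, hle⟩) hdt
        rw [this, ← hyt]
        exact List.dropLast_concat ..
    · -- F (i y) = g y
      rintro ⟨y, -⟩
      show wordProb Q ⊥ ((y.1 :: c y).dropLast ++ [x]) = Q ⊥ y.1
      rw [hword y, wordProb, downTo_wordProb htree hQ (hc y), mul_one]


end
end

section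
/- Let (S, ≼) be a uniform poset and X an upward run chain. Then Pr_e(T_e > n) = P^n(e, S_n) for all n ∈ ℕ, and μ(e) = E_e(T_e) = Σ_{n=0}^∞ P^n(e, S_n). Hence X is positive recurrent if and only if Σ_n P^n(e, S_n) < ∞. -/
open scoped ENNReal

noncomputable section
open scoped Classical

variable {S : Type*} [PartialOrder S] [OrderBot S]

section MyAux

variable {S : Type*} [PartialOrder S] [OrderBot S]

/-- Indicator with a fixed (classical) decidability instance. -/
def myInd (p : Prop) (a : ℝ≥0∞) : ℝ≥0∞ := if p then a else 0

lemma myInd_pos {p : Prop} (h : p) (a : ℝ≥0∞) : myInd p a = a := if_pos h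
lemma myInd_neg {p : Prop} (h : ¬ p) (a : ℝ≥0∞) : myInd p a = 0 := if_neg h
lemma myInd_zero (p : Prop) : myInd p 0 = 0 := by by_cases hp : p <;> simp [myInd, hp]
lemma myInd_and (p q : Prop) (a : ℝ≥0∞) : myInd (p ∧ q) a = myInd p (myInd q a) := by
  by_cases hp : p <;> by_cases hq : q <;> simp [myInd, hp, hq]
lemma myInd_congr {p q : Prop} (h : p ↔ q) {a b : ℝ≥0∞} (hab : p → a = b) :
    myInd p a = myInd q b := by
  by_cases hp : p
  · rw [myInd_pos hp, myInd_pos (h.mp hp), hab hp]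
  · rw [myInd_neg hp, myInd_neg (fun hq => hp (h.mpr hq))]
lemma myInd_mul (p : Prop) (a b : ℝ≥0∞) : a * myInd p b = myInd p (a * b) := by
  by_cases hp : p <;> simp [myInd, hp]
lemma myInd_add (p : Prop) (a b : ℝ≥0∞) : myInd p a + myInd p b = myInd p (a + b) := by
  by_cases hp : p <;> simp [myInd, hp]

lemma myTsumSubtypeInd {α : Type*} (p : α → Prop) (f : α → ℝ≥0∞) :
    ∑' x : {x // p x}, f x.1 = ∑' x : α, myInd (p x) (f x) := by
  have := tsum_subtype {x | p x} f
  simp only [Set.indicator_apply, Set.mem_setOf_eq] at this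
  exact this

lemma myTsumIndEq {β : Type*} (b : β) (f : β → ℝ≥0∞) :
    ∑' x : β, myInd (x = b) (f x) = f b := by
  have h : ∀ x : β, myInd (x = b) (f x) = if x = b then f b else 0 := by
    intro x
    by_cases hx : x = b
    · subst hx; simp [myInd]
    · simp [myInd, hx]
  rw [tsum_congr h, tsum_ite_eq]

/-- cons as an equivalence on fixed-length lists. -/
def myConsE (S : Type*) (n : ℕ) :
    S × {l : List S // l.length = n} ≃ {l : List S // l.length = n + 1} where
  toFun p := ⟨p.1 :: p.2.1, by simp [p.2.2]⟩
  invFun l := ⟨l.1.head (List.length_pos_iff.mp (by rw [l.2]; exact n.succ_pos)),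
    ⟨l.1.tail, by simp [List.length_tail, l.2]⟩⟩
  left_inv := fun ⟨y, ⟨l, hl⟩⟩ => rfl
  right_inv l := Subtype.ext (List.cons_head_tail _)

lemma myTsumLenZero {S : Type*} (f : List S → ℝ≥0∞) :
    (∑' l : List S, myInd (l.length = 0) (f l)) = f [] := by
  have h : ∀ l : List S, myInd (l.length = 0) (f l) = myInd (l = []) (f l) := by
    intro l
    rcases l with _ | ⟨a, t⟩ <;> simp [myInd]
  rw [tsum_congr h, myTsumIndEq]

lemma myTsumLenSucc {S : Type*} (n : ℕ) (f : List S → ℝ≥0∞) :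
    (∑' l : List S, myInd (l.length = n + 1) (f l))
      = ∑' y : S, ∑' l : List S, myInd (l.length = n) (f (y :: l)) := by
  rw [← myTsumSubtypeInd (fun l : List S => l.length = n + 1) f,
    ← (myConsE S n).tsum_eq, ENNReal.tsum_prod']
  refine tsum_congr fun y => ?_
  rw [← myTsumSubtypeInd (fun l : List S => l.length = n) (fun l => f (y :: l))]
  rfl

/-! ### survA / retA and the basic recursion -/

def survA (P : S → S → ℝ≥0∞) (z : S) (n : ℕ) : ℝ≥0∞ :=
  ∑' l : List S, myInd (l.length = n ∧ ⊥ ∉ l) (wordProb P z l)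

def retA (P : S → S → ℝ≥0∞) (z : S) (n : ℕ) : ℝ≥0∞ :=
  ∑' l : List S, myInd (l.length = n ∧ ⊥ ∉ l) (wordProb P z (l ++ [⊥]))

lemma survival_eq (P : S → S → ℝ≥0∞) (n : ℕ) : survival P ⊥ n = survA P ⊥ n :=
  myTsumSubtypeInd (fun l : List S => l.length = n ∧ ⊥ ∉ l) (fun l => wordProb P ⊥ l)

lemma returnAt_eq (P : S → S → ℝ≥0∞) (n : ℕ) : returnAt P ⊥ n = retA P ⊥ n :=
  myTsumSubtypeInd (fun l : List S => l.length = n ∧ ⊥ ∉ l) (fun l => wordProb P ⊥ (l ++ [⊥]))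

lemma survA_zero (P : S → S → ℝ≥0∞) (z : S) : survA P z 0 = 1 := by
  unfold survA
  have h : ∀ l : List S, myInd (l.length = 0 ∧ ⊥ ∉ l) (wordProb P z l)
      = myInd (l.length = 0) (wordProb P z l) := by
    intro l
    rcases l with _ | ⟨a, t⟩ <;> simp [myInd]
  rw [tsum_congr h, myTsumLenZero]
  rfl

lemma retA_zero (P : S → S → ℝ≥0∞) (z : S) : retA P z 0 = P z ⊥ := by
  unfold retA
  have h : ∀ l : List S, myInd (l.length = 0 ∧ ⊥ ∉ l) (wordProb P z (l ++ [⊥]))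
      = myInd (l.length = 0) (wordProb P z (l ++ [⊥])) := by
    intro l
    rcases l with _ | ⟨a, t⟩ <;> simp [myInd]
  rw [tsum_congr h, myTsumLenZero]
  simp [wordProb]

lemma notMem_cons_iff {y : S} (hy : y ≠ ⊥) (l : List S) : ((⊥ : S) ∉ y :: l) ↔ (⊥ : S) ∉ l := by
  constructor
  · exact fun h hm => h (List.mem_cons_of_mem _ hm)
  · intro h hm
    rcases List.mem_cons.mp hm with h1 | h1
    · exact hy h1.symm
    · exact h h1

lemma survA_succ (P : S → S → ℝ≥0∞) (z : S) (n : ℕ) :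
    survA P z (n + 1) = ∑' y : S, myInd (y ≠ ⊥) (P z y * survA P y n) := by
  unfold survA
  rw [tsum_congr (fun l : List S => myInd_and (l.length = n + 1) (⊥ ∉ l) (wordProb P z l)),
    myTsumLenSucc n (fun l => myInd (⊥ ∉ l) (wordProb P z l))]
  refine tsum_congr fun y => ?_
  by_cases hy : y = ⊥
  · subst hy
    rw [myInd_neg (by simp)]
    refine ENNReal.tsum_eq_zero.mpr fun l => ?_
    rw [myInd_neg (by simp : ¬ ((⊥ : S) ∉ (⊥ :: l))), myInd_zero]
  · rw [myInd_pos hy, ← ENNReal.tsum_mul_left]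
    refine tsum_congr fun l => ?_
    rw [myInd_mul, myInd_and]
    refine myInd_congr Iff.rfl fun _ => ?_
    refine myInd_congr (notMem_cons_iff hy l) fun _ => ?_
    simp [wordProb]

lemma retA_succ (P : S → S → ℝ≥0∞) (z : S) (n : ℕ) :
    retA P z (n + 1) = ∑' y : S, myInd (y ≠ ⊥) (P z y * retA P y n) := by
  unfold retA
  rw [tsum_congr (fun l : List S =>
      myInd_and (l.length = n + 1) (⊥ ∉ l) (wordProb P z (l ++ [⊥]))),
    myTsumLenSucc n (fun l => myInd (⊥ ∉ l) (wordProb P z (l ++ [⊥])))]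
  refine tsum_congr fun y => ?_
  by_cases hy : y = ⊥
  · subst hy
    rw [myInd_neg (by simp)]
    refine ENNReal.tsum_eq_zero.mpr fun l => ?_
    rw [myInd_neg (by simp : ¬ ((⊥ : S) ∉ (⊥ :: l))), myInd_zero]
  · rw [myInd_pos hy, ← ENNReal.tsum_mul_left]
    refine tsum_congr fun l => ?_
    rw [myInd_mul, myInd_and]
    refine myInd_congr Iff.rfl fun _ => ?_
    refine myInd_congr (notMem_cons_iff hy l) fun _ => ?_
    simp [wordProb]

lemma surv_rec (P : S → S → ℝ≥0∞) (hP : IsUpwardRunKernel P) :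
    ∀ (n : ℕ) (z : S), retA P z n + survA P z (n + 1) = survA P z n := by
  intro n
  induction n with
  | zero =>
    intro z
    rw [retA_zero, survA_succ, survA_zero]
    have h1 := hP.1 z
    rw [ENNReal.tsum_eq_add_tsum_ite (⊥ : S)] at h1
    have h2 : ∀ y : S, myInd (y ≠ ⊥) (P z y * survA P y 0) = if y = ⊥ then 0 else P z y := by
      intro y
      by_cases hy : y = ⊥ <;> simp [myInd, hy, survA_zero]
    rw [tsum_congr h2]
    exact h1
  | succ n ih =>
    intro z
    rw [retA_succ, survA_succ, ← ENNReal.tsum_add, survA_succ]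
    refine tsum_congr fun y => ?_
    rw [myInd_add]
    refine myInd_congr Iff.rfl fun _ => ?_
    rw [← mul_add, ih y]

/-! ### stepN as a sum over paths -/

lemma stepN_eq (P : S → S → ℝ≥0∞) :
    ∀ (n : ℕ) (z y : S), stepN P n z y
      = ∑' l : List S,
          myInd (l.length = n ∧ (z :: l).getLast (List.cons_ne_nil _ _) = y) (wordProb P z l) := by
  intro n
  induction n with
  | zero =>
    intro z y
    have h : ∀ l : List S,
        myInd (l.length = 0 ∧ (z :: l).getLast (List.cons_ne_nil _ _) = y) (wordProb P z l)
          = myInd (l.length = 0) (if z = y then 1 else 0) := by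
      intro l
      rcases l with _ | ⟨a, t⟩
      · by_cases hzy : z = y <;> simp [myInd, wordProb, List.getLast, hzy]
      · simp [myInd]
    rw [show stepN P 0 z y = (if z = y then 1 else 0) from rfl, tsum_congr h, myTsumLenZero]
  | succ n ih =>
    intro z y
    have hstep : stepN P (n + 1) z y = ∑' w : S, P z w * stepN P n w y := rfl
    rw [hstep, tsum_congr (fun l : List S => myInd_and (l.length = n + 1)
        ((z :: l).getLast (List.cons_ne_nil _ _) = y) (wordProb P z l)),
      myTsumLenSucc n
        (fun l => myInd ((z :: l).getLast (List.cons_ne_nil _ _) = y) (wordProb P z l))]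
    refine tsum_congr fun w => ?_
    rw [ih w y, ← ENNReal.tsum_mul_left]
    refine tsum_congr fun l => ?_
    rw [myInd_mul, myInd_and]
    refine myInd_congr Iff.rfl fun _ => ?_
    refine myInd_congr ?_ fun _ => ?_
    · rw [List.getLast_cons (List.cons_ne_nil w l)]
    · simp [wordProb]

/-! ### positive words are covering chains -/

lemma posChain (P : S → S → ℝ≥0∞) (hP : IsUpwardRunKernel P) :
    ∀ (l : List S) (z : S), wordProb P z l ≠ 0 → (⊥ : S) ∉ l → List.Chain (· ⋖ ·) z l
  | [], _, _, _ => List.Chain.nil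
  | y :: t, z, hw, hb => by
    rw [show wordProb P z (y :: t) = P z y * wordProb P y t from rfl, mul_ne_zero_iff] at hw
    have hy : y ≠ ⊥ := fun h => hb (by simp [h])
    have hpos : 0 < P z y := pos_iff_ne_zero.mpr hw.1
    have hc : z ⋖ y := ((hP.2 z y).mp hpos).resolve_right hy
    exact List.Chain.cons hc
      (posChain P hP t y hw.2 (fun h => hb (List.mem_cons_of_mem _ h)))

lemma posLow (P : S → S → ℝ≥0∞) (hP : IsUpwardRunKernel P) :
    ∀ (l : List S) (z : S), wordProb P z l ≠ 0 → (⊥ : S) ∈ l →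
      ∃ m < l.length, InLevel ((z :: l).getLast (List.cons_ne_nil _ _)) m
  | [], _, _, hb => absurd hb List.not_mem_nil
  | y :: t, z, hw, hb => by
    rw [show wordProb P z (y :: t) = P z y * wordProb P y t from rfl, mul_ne_zero_iff] at hw
    by_cases hbt : (⊥ : S) ∈ t
    · obtain ⟨m, hm, hlev⟩ := posLow P hP t y hw.2 hbt
      refine ⟨m, lt_trans hm (by simp), ?_⟩
      rwa [List.getLast_cons (List.cons_ne_nil _ _)]
    · have hy : y = ⊥ := by
        rcases List.mem_cons.mp hb with h | h
        · exact h.symm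
        · exact absurd h hbt
      subst hy
      have hch := posChain P hP t ⊥ hw.2 hbt
      refine ⟨t.length, by simp, ?_⟩
      rw [List.getLast_cons (List.cons_ne_nil _ _)]
      exact ⟨t, ⟨hch, rfl⟩, rfl⟩

lemma levelUnique {hu : ∀ (x : S) (l₁ l₂ : List S),
      IsPathTo l₁ x → IsPathTo l₂ x → l₁.length = l₂.length}
    {x : S} {m n : ℕ} (h1 : InLevel x m) (h2 : InLevel x n) : m = n := by
  obtain ⟨l₁, p₁, e₁⟩ := h1
  obtain ⟨l₂, p₂, e₂⟩ := h2
  rw [← e₁, ← e₂]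
  exact hu x l₁ l₂ p₁ p₂

lemma survEqLevel (P : S → S → ℝ≥0∞) (hP : IsUpwardRunKernel P)
    (hunif : ∀ (x : S) (l₁ l₂ : List S),
      IsPathTo l₁ x → IsPathTo l₂ x → l₁.length = l₂.length)
    (n : ℕ) : survival P ⊥ n = ∑' x : {x : S // InLevel x n}, stepN P n ⊥ x.1 := by
  rw [survival_eq]
  have fib : survA P ⊥ n = ∑' x : S, ∑' l : List S,
      myInd (l.length = n ∧ ⊥ ∉ l ∧ (⊥ :: l).getLast (List.cons_ne_nil _ _) = x)
        (wordProb P ⊥ l) := by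
    rw [ENNReal.tsum_comm]
    refine tsum_congr fun l => ?_
    have h : ∀ x : S,
        myInd (l.length = n ∧ ⊥ ∉ l ∧ (⊥ :: l).getLast (List.cons_ne_nil _ _) = x)
          (wordProb P ⊥ l)
        = myInd (x = (⊥ :: l).getLast (List.cons_ne_nil _ _))
            (myInd (l.length = n ∧ ⊥ ∉ l) (wordProb P ⊥ l)) := by
      intro x
      by_cases hx : x = (⊥ :: l).getLast (List.cons_ne_nil _ _)
      · rw [myInd_pos hx]
        refine myInd_congr ?_ fun _ => rfl
        constructor
        · rintro ⟨a, b, _⟩; exact ⟨a, b⟩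
        · rintro ⟨a, b⟩; exact ⟨a, b, hx.symm⟩
      · rw [myInd_neg hx, myInd_neg]
        rintro ⟨_, _, c⟩
        exact hx c.symm
    rw [tsum_congr h, myTsumIndEq]
  rw [fib, show (∑' x : {x : S // InLevel x n}, stepN P n ⊥ x.1)
      = ∑' x : S, myInd (InLevel x n) (stepN P n ⊥ x) from
    myTsumSubtypeInd (fun x : S => InLevel x n) (fun x => stepN P n ⊥ x)]
  refine tsum_congr fun x => ?_
  by_cases hx : InLevel x n
  · rw [myInd_pos hx, stepN_eq]
    refine tsum_congr fun l => ?_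
    by_cases hw : wordProb P ⊥ l = 0
    · rw [hw, myInd_zero, myInd_zero]
    by_cases hb : (⊥ : S) ∈ l
    · obtain ⟨m, hm, hlev⟩ := posLow P hP l ⊥ hw hb
      have hfalse : ¬ (l.length = n ∧ (⊥ :: l).getLast (List.cons_ne_nil _ _) = x) := by
        rintro ⟨h1, h2⟩
        rw [h2] at hlev
        have := levelUnique (hu := hunif) hlev hx
        omega
      rw [myInd_neg (fun h => h.2.1 hb), myInd_neg hfalse]
    · refine myInd_congr ?_ fun _ => rfl
      constructor
      · rintro ⟨a, _, c⟩; exact ⟨a, c⟩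
      · rintro ⟨a, c⟩; exact ⟨a, hb, c⟩
  · rw [myInd_neg hx]
    refine ENNReal.tsum_eq_zero.mpr fun l => ?_
    by_cases hc : l.length = n ∧ ⊥ ∉ l ∧ (⊥ :: l).getLast (List.cons_ne_nil _ _) = x
    · rw [myInd_pos hc]
      by_contra hw
      refine hx ?_
      rw [← hc.2.2]
      exact ⟨l, ⟨posChain P hP l ⊥ hw hc.2.1, rfl⟩, hc.1⟩
    · exact myInd_neg hc _

end MyAux

/-- on a uniform poset, `Pr_e(T_e > n) = Pⁿ(⊥, S_n)` for all `n`,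
`E_e(T_e) = ∑_n Pⁿ(⊥, S_n)`, and the upward run chain is positive recurrent iff this
sum is finite. -/
theorem uniform_upward_run_positive_recurrence {S : Type*} [PartialOrder S] [OrderBot S]
    [Countable S] (hfin : BoundedChainsFinite S)
    (hunif : ∀ (x : S) (l₁ l₂ : List S),
      IsPathTo l₁ x → IsPathTo l₂ x → l₁.length = l₂.length)
    (P : S → S → ℝ≥0∞) (hP : IsUpwardRunKernel P) :
    (∀ n : ℕ, survival P ⊥ n = ∑' x : {x : S // InLevel x n}, stepN P n ⊥ x.1) ∧
    ((∑' n : ℕ, survival P ⊥ n)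
      = ∑' n : ℕ, ∑' x : {x : S // InLevel x n}, stepN P n ⊥ x.1) ∧
    (PositiveRecurrent P (⊥ : S) ↔
      (∑' n : ℕ, ∑' x : {x : S // InLevel x n}, stepN P n ⊥ x.1) < ⊤) := by
  have b1 : ∀ n : ℕ, survival P ⊥ n = ∑' x : {x : S // InLevel x n}, stepN P n ⊥ x.1 :=
    fun n => survEqLevel P hP hunif n
  have b2 : (∑' n : ℕ, survival P ⊥ n)
      = ∑' n : ℕ, ∑' x : {x : S // InLevel x n}, stepN P n ⊥ x.1 :=
    tsum_congr fun n => b1 n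
  refine ⟨b1, b2, ?_⟩
  constructor
  · rintro ⟨_, hlt⟩
    rwa [← b2]
  · intro hlt
    have hfin : ∑' n : ℕ, survival P ⊥ n < ⊤ := by rwa [b2]
    refine ⟨?_, hfin⟩
    unfold Recurrent
    have key : ∀ N : ℕ, (∑ k ∈ Finset.range N, returnAt P (⊥ : S) k) + survival P ⊥ N = 1 := by
      intro N
      induction N with
      | zero => simp [survival_eq, survA_zero]
      | succ N ih =>
        rw [Finset.sum_range_succ, add_assoc, returnAt_eq, survival_eq,
          surv_rec P hP N ⊥, ← survival_eq, ih]
    apply le_antisymm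
    · rw [ENNReal.tsum_eq_iSup_nat]
      refine iSup_le fun N => ?_
      calc (∑ k ∈ Finset.range N, returnAt P ⊥ k)
          ≤ (∑ k ∈ Finset.range N, returnAt P ⊥ k) + survival P ⊥ N := le_self_add
        _ = 1 := key N
    · refine ENNReal.le_of_forall_pos_le_add fun ε hε _ => ?_
      have hex : ∃ N, survival P ⊥ N < (ε : ℝ≥0∞) := by
        by_contra hcon
        push_neg at hcon
        have hle : ∑' _ : ℕ, (ε : ℝ≥0∞) ≤ ∑' n, survival P ⊥ n :=
          ENNReal.tsum_le_tsum fun n => hcon n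
        rw [ENNReal.tsum_const_eq_top_of_ne_zero (ENNReal.coe_ne_zero.mpr hε.ne')] at hle
        exact hfin.ne (top_le_iff.mp hle)
      obtain ⟨N, hN⟩ := hex
      calc (1 : ℝ≥0∞) = (∑ k ∈ Finset.range N, returnAt P ⊥ k) + survival P ⊥ N :=
            (key N).symm
        _ ≤ (∑' k, returnAt P ⊥ k) + ε := add_le_add (ENNReal.sum_le_tsum _) hN.le

end
end
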